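/- Fix a real number λ, a nonnegative integer r, and sequences of real numbers (a_n)_{n≥0} and (b_n)_{n≥0}. If a_n = Σ_{k=0}^{n} (−1)^{n−k} [n+r, k+r]_{r,λ} b_k holds for every n ≥ 0, then b_n = Σ_{k=0}^{n} {n+r, k+r}_{r,λ} a_k holds for every n ≥ 0. -/

import Mathlib

/-!
Substituting `x ↦ -x` turns the defining identity of `[n+r, k+r]_{r,λ}` into
`(x - r)_k = ∑_j (-1)^(k-j) [k+r, j+r]_{r,λ} (x)_{j,λ}`. Feeding this into the defining identity
of `{n+r, k+r}_{r,λ}` at `x - r` expresses `(x)_{n,λ}` in the basis `(x)_{j,λ}`; comparing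
coefficients gives the orthogonality relation
`∑_{j ≤ k ≤ n} {n+r, k+r}_{r,λ} (-1)^(k-j) [k+r, j+r]_{r,λ} = δ_{jn}`,
and a triangular system is inverted by any left inverse of its matrix.
-/

open Finset

/-- The degenerate falling factorial `(x)_{n,λ} = x(x-λ)(x-2λ)⋯(x-(n-1)λ)`. -/
noncomputable def degFall (lam x : ℝ) (n : ℕ) : ℝ := ∏ i ∈ Finset.range n, (x - i * lam)

/-- The degenerate rising factorial `⟨x⟩_{n,λ} = x(x+λ)(x+2λ)⋯(x+(n-1)λ)`. -/
noncomputable def degRise (lam x : ℝ) (n : ℕ) : ℝ := ∏ i ∈ Finset.range n, (x + i * lam)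

section TriangularSums

variable {R : Type*} [CommRing R]

theorem sum_mul_sum_range_comm (n : ℕ) (u : ℕ → R) (v : ℕ → ℕ → R) (w : ℕ → R) :
    ∑ k ∈ range (n + 1), u k * ∑ j ∈ range (k + 1), v k j * w j
      = ∑ j ∈ range (n + 1), (∑ k ∈ Icc j n, u k * v k j) * w j := by
  simp only [mul_sum, sum_mul, range_eq_Ico, ← Ico_add_one_right_eq_Icc, mul_assoc]
  exact (sum_Ico_Ico_comm 0 (n + 1) fun j k => u k * (v k j * w j)).symm

theorem eq_sum_of_eq_sum_of_orthogonal (S T : ℕ → ℕ → R)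
    (horth : ∀ n, ∀ j ≤ n, ∑ k ∈ Icc j n, T n k * S k j = if j = n then 1 else 0)
    (a b : ℕ → R) (hab : ∀ n, a n = ∑ k ∈ range (n + 1), S n k * b k) (n : ℕ) :
    b n = ∑ k ∈ range (n + 1), T n k * a k := by
  calc b n = ∑ j ∈ range (n + 1), (if j = n then 1 else 0) * b j := by simp
    _ = ∑ j ∈ range (n + 1), (∑ k ∈ Icc j n, T n k * S k j) * b j :=
        sum_congr rfl fun j hj => by rw [horth n j (mem_range_succ_iff.mp hj)]
    _ = ∑ k ∈ range (n + 1), T n k * a k := by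
        rw [← sum_mul_sum_range_comm]
        simp only [hab]

end TriangularSums

theorem degRise_neg (lam x : ℝ) (n : ℕ) :
    degRise lam (-x) n = (-1) ^ n * degFall lam x n := by
  have hneg := prod_neg (s := range n) fun i : ℕ => x - i * lam
  rw [card_range] at hneg
  rw [degRise, degFall, ← hneg]
  exact prod_congr rfl fun _ _ => by ring

open Polynomial in
noncomputable def degFallSequence (lam : ℝ) : Polynomial.Sequence ℝ where
  elems' n := ∏ i ∈ range n, (X - C ((i : ℝ) * lam))
  degree_eq' n := by
    rw [degree_prod]
    simp only [degree_X_sub_C, sum_const, card_range, nsmul_one]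

theorem eval_degFallSequence (lam x : ℝ) (n : ℕ) :
    (degFallSequence lam n).eval x = degFall lam x n := by
  simp [degFallSequence, degFall, Polynomial.eval_prod]

theorem eq_of_sum_mul_degFall_eq (lam : ℝ) (m : ℕ) (c d : ℕ → ℝ)
    (h : ∀ x, ∑ j ∈ range m, c j * degFall lam x j = ∑ j ∈ range m, d j * degFall lam x j)
    (j : ℕ) (hj : j < m) : c j = d j := by
  have hzero : ∑ i ∈ range m, (c i - d i) • degFallSequence lam i = 0 := by
    refine Polynomial.funext fun x => ?_
    simpa [Polynomial.eval_finsetSum, eval_degFallSequence, sub_mul, sub_eq_zero] using h x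
  exact sub_eq_zero.mp <|
    linearIndependent_iff'.mp (degFallSequence lam).linearIndependent _ _ hzero j (mem_range.mpr hj)

theorem degFall_one_sub_eq_sum (lam : ℝ) (r : ℕ) (S1 : ℕ → ℕ → ℝ)
    (hS1 : ∀ (n : ℕ) (x : ℝ),
      degRise 1 (x + r) n = ∑ k ∈ range (n + 1), S1 n k * degRise lam x k)
    (k : ℕ) (x : ℝ) :
    degFall 1 (x - r) k = ∑ j ∈ range (k + 1), (-1) ^ (k - j) * S1 k j * degFall lam x j := by
  have h := hS1 k (-x)
  rw [show -x + r = -(x - r) by ring] at h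
  simp only [degRise_neg] at h
  calc degFall 1 (x - r) k = (-1) ^ k * ((-1) ^ k * degFall 1 (x - r) k) := by
        rw [← mul_assoc, ← mul_pow]; norm_num
    _ = ∑ j ∈ range (k + 1), (-1) ^ (k - j) * S1 k j * degFall lam x j := by
        rw [h, mul_sum]
        refine sum_congr rfl fun j hj => ?_
        rw [pow_sub₀ _ (by norm_num) (mem_range_succ_iff.mp hj), ← inv_pow, inv_neg_one]
        ring

theorem degStirling_orthogonality (lam : ℝ) (r : ℕ) (S1 S2 : ℕ → ℕ → ℝ)
    (hS1 : ∀ (n : ℕ) (x : ℝ),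
      degRise 1 (x + r) n = ∑ k ∈ range (n + 1), S1 n k * degRise lam x k)
    (hS2 : ∀ (n : ℕ) (x : ℝ),
      degFall lam (x + r) n = ∑ k ∈ range (n + 1), S2 n k * degFall 1 x k)
    (n j : ℕ) (hj : j ≤ n) :
    ∑ k ∈ Icc j n, S2 n k * ((-1) ^ (k - j) * S1 k j) = if j = n then 1 else 0 := by
  refine eq_of_sum_mul_degFall_eq lam (n + 1)
    (fun i => ∑ k ∈ Icc i n, S2 n k * ((-1) ^ (k - i) * S1 k i)) (fun i => if i = n then 1 else 0)
    (fun x => ?_) j (Nat.lt_succ_of_le hj)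
  rw [← sum_mul_sum_range_comm]
  simp_rw [← degFall_one_sub_eq_sum lam r S1 hS1, ← hS2, sub_add_cancel]
  simp

/-- Inverse relation (forward direction): if
`a_n = ∑_{k=0}^{n} (−1)^{n−k} [n+r,k+r]_{r,λ} b_k` for all `n`, then
`b_n = ∑_{k=0}^{n} {n+r,k+r}_{r,λ} a_k` for all `n`. -/
theorem inverse_relation_forward (lam : ℝ) (r : ℕ) (S1 S2 : ℕ → ℕ → ℝ)
    (hS1 : ∀ (n : ℕ) (x : ℝ),
      degRise 1 (x + r) n = ∑ k ∈ range (n + 1), S1 n k * degRise lam x k)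
    (hS2 : ∀ (n : ℕ) (x : ℝ),
      degFall lam (x + r) n = ∑ k ∈ range (n + 1), S2 n k * degFall 1 x k)
    (a b : ℕ → ℝ)
    (hab : ∀ n : ℕ, a n = ∑ k ∈ range (n + 1), (-1 : ℝ) ^ (n - k) * S1 n k * b k) :
    ∀ n : ℕ, b n = ∑ k ∈ range (n + 1), S2 n k * a k :=
  eq_sum_of_eq_sum_of_orthogonal (fun n k => (-1) ^ (n - k) * S1 n k) S2
    (degStirling_orthogonality lam r S1 S2 hS1 hS2) a b hab
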